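/- Existence of a most specific generalisation of first-order terms: for any two terms s and t over a signature with variables drawn from a countably infinite set, there exists a common generalisation g of s and t (i.e., there are substitutions σ and τ with g·σ = s and g·τ = t) such that every common generalisation g' of s and t has a substitution θ with g'·θ = g. -/
import Mathlib


/-- A first-order term over a fixed-arity signature `(L, a)` with variables
from `V`: either a variable `v : V`, or a node labelled `l : L` together with
exactly `a l` child terms (indexed by `Fin (a l)`). -/
inductive TermV (V L : Type) (a : L → ℕ) : Type where
  | var (v : V) : TermV V L a
  | node (l : L) (ts : Fin (a l) → TermV V L a) : TermV V L a

/-- Application `g·σ` of a substitution `σ : V → Term` to a term `g`: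
simultaneously replace each variable `v` by `σ v`. -/
def TermV.subst {V L : Type} {a : L → ℕ} (σ : V → TermV V L a) :
    TermV V L a → TermV V L a
  | .var v => σ v
  | .node l ts => .node l (fun i => (ts i).subst σ)

open Classical in
/-- Anti-unifier: same labels recurse, otherwise produce a variable `φ s t`. -/
noncomputable def antiUnif {V L : Type} {a : L → ℕ}
    (φ : TermV V L a → TermV V L a → V) :
    TermV V L a → TermV V L a → TermV V L a
  | .var v, t => .var (φ (.var v) t)
  | .node l ss, .var v => .var (φ (.node l ss) (.var v))
  | .node l ss, .node l' ts =>
    if h : l' = l then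
      .node l (fun i => antiUnif φ (ss i) (ts (Fin.cast (congrArg a h.symm) i)))
    else .var (φ (.node l ss) (.node l' ts))

open Classical in
/-- The set of pairs at which `antiUnif` produces a fresh variable. -/
noncomputable def pairs {V L : Type} {a : L → ℕ} :
    TermV V L a → TermV V L a → Set (TermV V L a × TermV V L a)
  | .var v, t => {(.var v, t)}
  | .node l ss, .var v => {(.node l ss, .var v)}
  | .node l ss, .node l' ts =>
    if h : l' = l then
      ⋃ i, pairs (ss i) (ts (Fin.cast (congrArg a h.symm) i))
    else {(.node l ss, .node l' ts)}

theorem pairs_finite {V L : Type} {a : L → ℕ} (s t : TermV V L a) :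
    (pairs s t).Finite := by
  induction s generalizing t with
  | var v => simp [pairs]
  | node l ss ih =>
    cases t with
    | var v => simp [pairs]
    | node l' ts =>
      by_cases h : l' = l
      · rw [pairs, dif_pos h]
        exact Set.finite_iUnion fun i => ih i _
      · rw [pairs, dif_neg h]
        exact Set.finite_singleton _

/-- Substituting the anti-unifier of the images commutes with substitution. -/
theorem antiUnif_subst {V L : Type} {a : L → ℕ}
    (φ : TermV V L a → TermV V L a → V) (σ' τ' : V → TermV V L a)
    (g : TermV V L a) :
    g.subst (fun v => antiUnif φ (σ' v) (τ' v))
      = antiUnif φ (g.subst σ') (g.subst τ') := by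
  induction g with
  | var v => rfl
  | node l ts ih =>
    show TermV.node l _ = antiUnif φ (.node l _) (.node l _)
    rw [antiUnif, dif_pos rfl]
    exact congrArg _ (funext fun i => by simpa using ih i)

theorem exists_most_specific_generalisation {V L : Type} (a : L → ℕ)
    [Countable V] [Infinite V] (s t : TermV V L a) :
    ∃ g : TermV V L a,
      (∃ σ τ : V → TermV V L a, g.subst σ = s ∧ g.subst τ = t) ∧
      ∀ g' : TermV V L a,
        (∃ σ' τ' : V → TermV V L a, g'.subst σ' = s ∧ g'.subst τ' = t) →
        ∃ θ : V → TermV V L a, g'.subst θ = g := by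
  classical
  set P := pairs s t with hP
  have hPfin : P.Finite := pairs_finite s t
  haveI : Countable P := hPfin.countable
  obtain ⟨f, hf⟩ := Countable.exists_injective_nat P
  obtain ⟨v0⟩ := (inferInstance : Nonempty V)
  let nemb := Infinite.natEmbedding V
  -- an injection from P into V
  let e : P → V := fun p => nemb (f p)
  have he : Function.Injective e := fun p q h => hf (nemb.injective h)
  let φ : TermV V L a → TermV V L a → V := fun x y =>
    if h : (x, y) ∈ P then e ⟨(x, y), h⟩ else v0
  have hφ : ∀ p q : TermV V L a × TermV V L a, p ∈ P → q ∈ P →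
      φ p.1 p.2 = φ q.1 q.2 → p = q := by
    intro p q hp hq hpq
    simp only [φ, dif_pos hp, dif_pos hq] at hpq
    have := he hpq
    simpa using congrArg Subtype.val this
  let σ : V → TermV V L a := fun v =>
    if h : ∃ p : TermV V L a × TermV V L a, p ∈ P ∧ φ p.1 p.2 = v then
      (Classical.choose h).1 else .var v
  let τ : V → TermV V L a := fun v =>
    if h : ∃ p : TermV V L a × TermV V L a, p ∈ P ∧ φ p.1 p.2 = v then
      (Classical.choose h).2 else .var v
  have hσ : ∀ p : TermV V L a × TermV V L a, p ∈ P → σ (φ p.1 p.2) = p.1 := by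
    intro p hp
    have hex : ∃ q : TermV V L a × TermV V L a, q ∈ P ∧ φ q.1 q.2 = φ p.1 p.2 :=
      ⟨p, hp, rfl⟩
    have hq := Classical.choose_spec hex
    have : Classical.choose hex = p := hφ _ _ hq.1 hp hq.2
    simp only [σ, dif_pos hex, this]
  have hτ : ∀ p : TermV V L a × TermV V L a, p ∈ P → τ (φ p.1 p.2) = p.2 := by
    intro p hp
    have hex : ∃ q : TermV V L a × TermV V L a, q ∈ P ∧ φ q.1 q.2 = φ p.1 p.2 :=
      ⟨p, hp, rfl⟩
    have hq := Classical.choose_spec hex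
    have : Classical.choose hex = p := hφ _ _ hq.1 hp hq.2
    simp only [τ, dif_pos hex, this]
  have key : ∀ s' t' : TermV V L a, pairs s' t' ⊆ P →
      (antiUnif φ s' t').subst σ = s' ∧ (antiUnif φ s' t').subst τ = t' := by
    intro s'
    induction s' with
    | var v =>
      intro t' hsub
      have hmem : ((TermV.var v : TermV V L a), t') ∈ P := by
        apply hsub; simp [pairs]
      exact ⟨hσ _ hmem, hτ _ hmem⟩
    | node l ss ih =>
      intro t' hsub
      cases t' with
      | var w =>
        have hmem : ((TermV.node l ss : TermV V L a), TermV.var w) ∈ P := by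
          apply hsub; simp [pairs]
        exact ⟨hσ _ hmem, hτ _ hmem⟩
      | node l' ts =>
        by_cases h : l' = l
        · subst h
          rw [pairs, dif_pos rfl] at hsub
          rw [antiUnif, dif_pos rfl]
          have hsub' : ∀ i, pairs (ss i) (ts (Fin.cast (congrArg a rfl.symm) i)) ⊆ P :=
            fun i => fun p hp => hsub (Set.mem_iUnion.mpr ⟨i, hp⟩)
          constructor
          · show TermV.node l' _ = TermV.node l' ss
            exact congrArg _ (funext fun i => (ih i _ (hsub' i)).1)
          · show TermV.node l' _ = TermV.node l' ts
            refine congrArg _ (funext fun i => ?_)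
            have := (ih i _ (hsub' i)).2
            simpa using this
        · rw [pairs, dif_neg h] at hsub
          rw [antiUnif, dif_neg h]
          have hmem : ((TermV.node l ss : TermV V L a), TermV.node l' ts) ∈ P := by
            apply hsub; simp
          exact ⟨hσ _ hmem, hτ _ hmem⟩
  refine ⟨antiUnif φ s t, ⟨σ, τ, key s t fun p hp => hp⟩, ?_⟩
  rintro g' ⟨σ', τ', hs, ht⟩
  exact ⟨fun v => antiUnif φ (σ' v) (τ' v), by rw [antiUnif_subst, hs, ht]⟩
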